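/- arXiv:0901.3071 — 2 statements merged into one kernel-verified Lean document; each statement's English description precedes it below -/
import Mathlib

section
/- Let Γ be a group with a subgroup N of index 2, and let ρ : N → U(n) be an irreducible unitary representation. Then ρ cannot simultaneously admit a real extension ρ̂ and a quaternionic extension ρ̃ to Γ. (A real extension satisfies ρ̂(x)² = ρ(x²) for x ∉ N; a quaternionic extension satisfies ρ̃(x)² = -ρ(x²).) -/
/-!
Pick `x ∉ N` and put `A = ρ̂(x)`, `B = ρ̃(x)`. Both `x·x` and `x·z·x` (for `z ∈ N`) lie in `N`,
where `ρ̂` and `ρ̃` agree; expanding them with the two twisted multiplication rules gives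
`A·Ā = -B·B̄` and `A·conj(ρ z)·Ā = -B·conj(ρ z)·B̄`. Hence `A⁻¹B` commutes with every
`conj(ρ z)`, so by Schur's lemma `B = d·A` for a scalar `d`. Then `A·Ā = -|d|²·A·Ā`, which is
impossible because `A·Ā` is invertible.
-/

open ComplexConjugate Matrix

theorem Matrix.exists_eq_smul_one_of_forall_commute {K ι I : Type*} [Field K] [IsAlgClosed K]
    [Fintype ι] [DecidableEq ι] [Nonempty ι] (ρ : I → Matrix ι ι K)
    (hirr : ∀ W : Submodule K (ι → K), (∀ i, ∀ v ∈ W, ρ i *ᵥ v ∈ W) → W = ⊥ ∨ W = ⊤)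
    {T : Matrix ι ι K} (hT : ∀ i, Commute T (ρ i)) : ∃ c : K, T = c • 1 := by
  obtain ⟨c, hc⟩ := Module.End.exists_eigenvalue (Matrix.toLin' T)
  have hinv : ∀ i, ∀ v ∈ Module.End.eigenspace (Matrix.toLin' T) c,
      ρ i *ᵥ v ∈ Module.End.eigenspace (Matrix.toLin' T) c := by
    intro i v hv
    rw [Module.End.mem_eigenspace_iff, Matrix.toLin'_apply] at hv ⊢
    rw [Matrix.mulVec_mulVec, (hT i).eq, ← Matrix.mulVec_mulVec, hv, Matrix.mulVec_smul]
  have htop := (hirr _ hinv).resolve_left hc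
  refine ⟨c, Matrix.toLin'.injective (LinearMap.ext fun v => ?_)⟩
  have hv : v ∈ Module.End.eigenspace (Matrix.toLin' T) c := htop ▸ Submodule.mem_top
  rw [Module.End.mem_eigenspace_iff] at hv
  rw [hv, Matrix.toLin'_apply, Matrix.smul_mulVec, Matrix.one_mulVec]

theorem commute_mul_of_mul_eq_neg_mul {α : Type*} [Ring α] {a a' b b' c r : α}
    (hca : c * a = 1) (hb' : IsUnit b') (h : a * a' = -(b * b'))
    (hr : a * r * a' = -(b * r * b')) : Commute (c * b) r := by
  -- multiplying by `c` on the left eliminates `a`; then cancel the unit `b'`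
  have ha' : a' = -(c * b * b') := by
    rw [← one_mul a', ← hca, mul_assoc, h, mul_neg, mul_assoc]
  have hr' : r * a' = -(c * b * r * b') := by
    rw [← one_mul (r * a'), ← hca, mul_assoc, ← mul_assoc a, hr]; noncomm_ring
  rw [ha'] at hr'
  refine (hb'.mul_left_inj.mp ?_).symm
  simpa [mul_assoc] using hr'

theorem Matrix.isUnit_mul_map_conj {ι : Type*} [Fintype ι] [DecidableEq ι] {A : Matrix ι ι ℂ}
    (hA : A ∈ unitary (Matrix ι ι ℂ)) : IsUnit (A * A.map conj) :=
  (Unitary.isUnit_coe (U := ⟨A, hA⟩)).mul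
    ((Unitary.isUnit_coe (U := ⟨A, hA⟩)).map (starRingEnd ℂ).mapMatrix)

theorem eq_zero_of_mul_conj_smul_eq_neg {M : Type*} [AddCommGroup M] [Module ℂ M] {c : ℂ}
    {P : M} (h : (c * conj c) • P = -P) : P = 0 := by
  have hP : ((Complex.normSq c : ℂ) + 1) • P = 0 := by
    rw [add_smul, ← Complex.mul_conj, h, one_smul, neg_add_cancel]
  refine (smul_eq_zero.mp hP).resolve_left ?_
  exact_mod_cast (add_pos_of_nonneg_of_pos (Complex.normSq_nonneg c) one_pos).ne'

section Extension

variable {Γ ι : Type*} [Group Γ] [Fintype ι] {ξ : Γ → ZMod 2}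

-- Elements with `ξ a = 1` act antilinearly, as `ρ a` composed with complex conjugation.
def IsRealExtension (ξ : Γ → ZMod 2) (ρ : Γ → Matrix ι ι ℂ) : Prop :=
  ∀ a b, ρ (a * b) = ρ a * (if ξ a = 0 then ρ b else (ρ b).map conj)

def IsQuaternionicExtension (ξ : Γ → ZMod 2) (ρ : Γ → Matrix ι ι ℂ) : Prop :=
  ∀ a b, ρ (a * b) = ((-1 : ℂ) ^ ((ξ a).val * (ξ b).val)) •
    (ρ a * (if ξ a = 0 then ρ b else (ρ b).map conj))

theorem IsRealExtension.map_mul_of_eq_one {ρ : Γ → Matrix ι ι ℂ} (h : IsRealExtension ξ ρ)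
    {a : Γ} (ha : ξ a = 1) (b : Γ) : ρ (a * b) = ρ a * (ρ b).map conj := by
  rw [h, ha, if_neg one_ne_zero]

theorem IsQuaternionicExtension.map_mul_of_eq_one_of_eq_zero {ρ : Γ → Matrix ι ι ℂ}
    (h : IsQuaternionicExtension ξ ρ) {a b : Γ} (ha : ξ a = 1) (hb : ξ b = 0) :
    ρ (a * b) = ρ a * (ρ b).map conj := by
  rw [h, ha, hb, if_neg one_ne_zero, ZMod.val_zero, mul_zero, pow_zero, one_smul]

theorem IsQuaternionicExtension.map_mul_of_eq_one_of_eq_one {ρ : Γ → Matrix ι ι ℂ}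
    (h : IsQuaternionicExtension ξ ρ) {a b : Γ} (ha : ξ a = 1) (hb : ξ b = 1) :
    ρ (a * b) = -(ρ a * (ρ b).map conj) := by
  rw [h, ha, hb, if_neg one_ne_zero, ZMod.val_one, mul_one, pow_one, neg_one_smul]

variable {ρhat ρtil : Γ → Matrix ι ι ℂ}

theorem real_mul_conj_eq_neg_quaternionic_mul_conj (hξ : ∀ a b, ξ (a * b) = ξ a + ξ b)
    (hagree : ∀ z, ξ z = 0 → ρhat z = ρtil z) (hreal : IsRealExtension ξ ρhat)
    (hquat : IsQuaternionicExtension ξ ρtil) {a b : Γ} (ha : ξ a = 1) (hb : ξ b = 1) :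
    ρhat a * (ρhat b).map conj = -(ρtil a * (ρtil b).map conj) := by
  have hab : ξ (a * b) = 0 := by rw [hξ, ha, hb]; decide
  rw [← hreal.map_mul_of_eq_one ha, ← hquat.map_mul_of_eq_one_of_eq_one ha hb, hagree _ hab]

variable [DecidableEq ι]

theorem commute_conj_star_real_mul_quaternionic (hξ : ∀ a b, ξ (a * b) = ξ a + ξ b)
    (hagree : ∀ z, ξ z = 0 → ρhat z = ρtil z) (hreal : IsRealExtension ξ ρhat)
    (hquat : IsQuaternionicExtension ξ ρtil) {x z : Γ} (hxU : ρhat x ∈ unitary (Matrix ι ι ℂ))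
    (hx : ξ x = 1) (hz : ξ z = 0) :
    Commute ((star (ρhat x) * ρtil x).map conj) (ρhat z) := by
  have hxz : ξ (x * z) = 1 := by rw [hξ, hx, hz, add_zero]
  have hsq := real_mul_conj_eq_neg_quaternionic_mul_conj hξ hagree hreal hquat hx hx
  have hunit : IsUnit ((ρtil x).map conj) := by
    refine isUnit_of_mul_isUnit_right (x := ρtil x) ?_
    rw [← neg_neg (ρtil x * _), ← hsq]
    exact (Matrix.isUnit_mul_map_conj hxU).neg
  have hconj : Commute (star (ρhat x) * ρtil x) ((ρhat z).map conj) := by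
    refine commute_mul_of_mul_eq_neg_mul (Unitary.star_mul_self_of_mem hxU) hunit hsq ?_
    have h := real_mul_conj_eq_neg_quaternionic_mul_conj hξ hagree hreal hquat hxz hx
    rwa [hreal.map_mul_of_eq_one hx, hquat.map_mul_of_eq_one_of_eq_zero hx hz, ← hagree z hz] at h
  simpa [Function.comp_def] using hconj.map (starRingEnd ℂ).mapMatrix

theorem exists_quaternionic_eq_smul_real [Nonempty ι] (hξ : ∀ a b, ξ (a * b) = ξ a + ξ b)
    (hagree : ∀ z, ξ z = 0 → ρhat z = ρtil z) (hreal : IsRealExtension ξ ρhat)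
    (hquat : IsQuaternionicExtension ξ ρtil)
    (hirr : ∀ W : Submodule ℂ (ι → ℂ),
      (∀ z, ξ z = 0 → ∀ v ∈ W, ρhat z *ᵥ v ∈ W) → W = ⊥ ∨ W = ⊤)
    {x : Γ} (hxU : ρhat x ∈ unitary (Matrix ι ι ℂ)) (hx : ξ x = 1) :
    ∃ d : ℂ, ρtil x = d • ρhat x := by
  obtain ⟨c, hc⟩ := Matrix.exists_eq_smul_one_of_forall_commute (fun z : {z // ξ z = 0} ↦ ρhat z)
    (fun W hW ↦ hirr W fun z hz ↦ hW ⟨z, hz⟩)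
    (fun z ↦ commute_conj_star_real_mul_quaternionic hξ hagree hreal hquat hxU hx z.2)
  have hc' : star (ρhat x) * ρtil x = conj c • 1 := by
    simpa [Function.comp_def, Matrix.map_smul' _ _ _ (map_mul _),
      Matrix.map_one _ (map_zero _) (map_one _)] using congrArg (Matrix.map · conj) hc
  refine ⟨conj c, ?_⟩
  calc ρtil x = ρhat x * (star (ρhat x) * ρtil x) := by
        rw [← mul_assoc, Unitary.mul_star_self_of_mem hxU, one_mul]
    _ = conj c • ρhat x := by rw [hc', Matrix.mul_smul, mul_one]

end Extension

theorem stmt_6_general {n : ℕ} (hn : 0 < n) {Γ : Type*} [Group Γ]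
    (ξ : Γ → ZMod 2) (hξ : ∀ a b, ξ (a * b) = ξ a + ξ b) (hsurj : Function.Surjective ξ)
    (ρhat ρtil : Γ → Matrix (Fin n) (Fin n) ℂ)
    (hhatU : ∀ a, ρhat a ∈ Matrix.unitaryGroup (Fin n) ℂ)
    (hagree : ∀ z, ξ z = 0 → ρhat z = ρtil z)
    (hreal : ∀ a b, ρhat (a * b) =
      ρhat a * (if ξ a = 0 then ρhat b else (ρhat b).map (starRingEnd ℂ)))
    (hquat : ∀ a b, ρtil (a * b) = ((-1 : ℂ) ^ ((ξ a).val * (ξ b).val)) •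
      (ρtil a * (if ξ a = 0 then ρtil b else (ρtil b).map (starRingEnd ℂ))))
    (hirr : ∀ W : Submodule ℂ (Fin n → ℂ),
      (∀ z, ξ z = 0 → ∀ v ∈ W, (ρhat z).mulVec v ∈ W) → W = ⊥ ∨ W = ⊤) :
    False := by
  have : Nonempty (Fin n) := Fin.pos_iff_nonempty.mp hn
  obtain ⟨x, hx⟩ := hsurj 1
  obtain ⟨d, hd⟩ := exists_quaternionic_eq_smul_real hξ hagree hreal hquat hirr (hhatU x) hx
  have hsq := real_mul_conj_eq_neg_quaternionic_mul_conj hξ hagree hreal hquat hx hx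
  refine (isUnit_mul_map_conj (hhatU x)).ne_zero (eq_zero_of_mul_conj_smul_eq_neg (c := d) ?_)
  conv_rhs => rw [hsq, neg_neg, hd, Matrix.map_smul' _ _ _ (map_mul _), Matrix.smul_mul,
    Matrix.mul_smul, smul_smul]

/-- An irreducible unitary representation `ρ` of the index-two subgroup `N = ξ⁻¹(0)` of `Γ`
cannot simultaneously admit a real extension `ρ̂` (a twisted homomorphism into the extended
unitary group, so that `ρ̂(x)² = ρ(x²)` for `x ∉ N`) and a quaternionic extension `ρ̃`
(satisfying the sign rule `ρ̃(a)ρ̃(b) = (-1)^{ξ(a)ξ(b)} ρ̃(ab)`, so `ρ̃(x)² = -ρ(x²)`). -/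
theorem stmt_6 {n : ℕ} (hn : 0 < n) {Γ : Type*} [Group Γ]
    (ξ : Γ → ZMod 2) (hξ : ∀ a b, ξ (a * b) = ξ a + ξ b) (hsurj : Function.Surjective ξ)
    (ρhat ρtil : Γ → Matrix (Fin n) (Fin n) ℂ)
    (hhatU : ∀ a, ρhat a ∈ Matrix.unitaryGroup (Fin n) ℂ)
    (htilU : ∀ a, ρtil a ∈ Matrix.unitaryGroup (Fin n) ℂ)
    (hagree : ∀ z, ξ z = 0 → ρhat z = ρtil z)
    (hreal : ∀ a b, ρhat (a * b) =
      ρhat a * (if ξ a = 0 then ρhat b else (ρhat b).map (starRingEnd ℂ)))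
    (hquat : ∀ a b, ρtil (a * b) = ((-1 : ℂ) ^ ((ξ a).val * (ξ b).val)) •
      (ρtil a * (if ξ a = 0 then ρtil b else (ρtil b).map (starRingEnd ℂ))))
    (hirr : ∀ W : Submodule ℂ (Fin n → ℂ),
      (∀ z, ξ z = 0 → ∀ v ∈ W, (ρhat z).mulVec v ∈ W) → W = ⊥ ∨ W = ⊤) :
    False :=
  stmt_6_general hn ξ hξ hsurj ρhat ρtil hhatU hagree hreal hquat hirr
end

section
/- Let X be a topological space with a continuous involution σ, fix x₀ with σ(x₀) ≠ x₀, and let Γ be the set of homotopy classes (rel endpoints) of paths starting at x₀ and ending at x₀ or at σ(x₀), with multiplication γ₂·γ₁ = γ₂ ∘ γ₁ if γ₁(1) = x₀ and γ₂·γ₁ = σ(γ₂) ∘ γ₁ if γ₁(1) = σ(x₀). Then Γ is a group, π₁(X,x₀) is a normal subgroup, and there is an exact sequence 0 → π₁(X,x₀) → Γ → ℤ/2 → 0 given by the endpoint map. -/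
/-!
Since `σ` is an involution, `σ (σ γ)` is `γ` up to the casts along `σ (σ x) = x`; together with
functoriality of `σ` on path classes, the group axioms then reduce to associativity and inverses
in the fundamental groupoid. The loops are the kernel of the endpoint map to `ℤ/2`, which is onto
because `x₀` and `σ x₀` are joined by a path.
-/

open Path.Homotopic

namespace Path.Homotopic.Quotient

variable {X Y : Type*} [TopologicalSpace X] [TopologicalSpace Y] {x y z : X}

theorem map_trans (a : Path.Homotopic.Quotient x y) (b : Path.Homotopic.Quotient y z)
    (f : C(X, Y)) : (a.trans b).map f = (a.map f).trans (b.map f) := by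
  induction a; induction b
  exact congrArg mk (Path.map_trans _ _ f.continuous)

theorem map_refl (x : X) (f : C(X, Y)) : (refl x).map f = refl (f x) :=
  rfl

theorem trans_cast {y' z' : X} (a : Path.Homotopic.Quotient x y')
    (b : Path.Homotopic.Quotient y z) (hy : y' = y) (hz : z' = z) :
    a.trans (b.cast hy hz) = ((a.cast rfl hy.symm).trans b).cast rfl hz := by
  subst hy hz; simp only [cast_rfl_rfl]

theorem typeCast_eq_cast {x' y' : X} (γ : Path.Homotopic.Quotient x y)
    (e : Path.Homotopic.Quotient x y = Path.Homotopic.Quotient x' y') (hx : x' = x)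
    (hy : y' = y) : _root_.cast e γ = γ.cast hx hy := by
  subst hx hy; simp only [cast_eq, cast_rfl_rfl]

theorem map_map_of_involutive {σ : C(X, X)} (hσ : ∀ x, σ (σ x) = x)
    (a : Path.Homotopic.Quotient x y) : (a.map σ).map σ = a.cast (hσ x) (hσ y) := by
  induction a with | mk γ =>
  exact eq_of_heq ((hpath_hext fun t => hσ (γ t)).trans (cast_heq _ _).symm)

end Path.Homotopic.Quotient

abbrev EquivariantFundamentalGroup {X : Type*} [TopologicalSpace X] (σ : C(X, X)) (x₀ : X) :
    Type _ :=
  Path.Homotopic.Quotient x₀ x₀ ⊕ Path.Homotopic.Quotient x₀ (σ x₀)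

namespace EquivariantFundamentalGroup

open Path.Homotopic.Quotient

variable {X : Type*} [TopologicalSpace X] {σ : C(X, X)} {x₀ : X}

noncomputable def mul (hσ : ∀ x, σ (σ x) = x) :
    EquivariantFundamentalGroup σ x₀ → EquivariantFundamentalGroup σ x₀ →
      EquivariantFundamentalGroup σ x₀
  | .inl c, .inl a => .inl (a.trans c)
  | .inr c, .inl a => .inr (a.trans c)
  | .inl c, .inr a => .inr (a.trans (c.map σ))
  | .inr c, .inr a => .inl (a.trans ((c.map σ).cast rfl (hσ x₀).symm))

noncomputable def inv (hσ : ∀ x, σ (σ x) = x) :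
    EquivariantFundamentalGroup σ x₀ → EquivariantFundamentalGroup σ x₀
  | .inl a => .inl a.symm
  | .inr a => .inr ((a.symm.map σ).cast (hσ x₀).symm rfl)

variable (hσ : ∀ x, σ (σ x) = x)

theorem mul_assoc (a b c : EquivariantFundamentalGroup σ x₀) :
    mul hσ (mul hσ a b) c = mul hσ a (mul hσ b c) := by
  rcases a with a | a <;> rcases b with b | b <;> rcases c with c | c <;>
    simp only [mul, map_trans, map_cast, map_map_of_involutive hσ, trans_cast, Quotient.cast_cast,
      cast_rfl_rfl, Quotient.trans_assoc, Sum.inl.injEq, Sum.inr.injEq] <;>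
    -- a cast left between two factors by `trans_assoc` is absorbed after reassociating
    simp only [← Quotient.trans_assoc, trans_cast, cast_rfl_rfl]

theorem one_mul (a : EquivariantFundamentalGroup σ x₀) : mul hσ (.inl (refl x₀)) a = a := by
  rcases a with a | a <;> simp [mul, map_refl]

theorem mul_one (a : EquivariantFundamentalGroup σ x₀) : mul hσ a (.inl (refl x₀)) = a := by
  rcases a with a | a <;> simp [mul]

theorem inv_mul_cancel (a : EquivariantFundamentalGroup σ x₀) :
    mul hσ (inv hσ a) a = .inl (refl x₀) := by
  rcases a with a | a <;> simp [mul, inv, map_cast, map_map_of_involutive hσ]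

end EquivariantFundamentalGroup

open EquivariantFundamentalGroup in
/-- The equivariant (orbifold) fundamental group of a space `X` with a continuous
involution `σ` and a base point `x₀` with `σ x₀ ≠ x₀`: on the disjoint union `Γ` of the
homotopy classes of loops at `x₀` and of paths from `x₀` to `σ x₀`, the multiplication
`γ₂·γ₁ = γ₂ ∘ γ₁` (when `γ₁` ends at `x₀`) and `γ₂·γ₁ = σ(γ₂) ∘ γ₁` (when `γ₁` ends at
`σ x₀`) defines a group structure; the classes of loops form a normal subgroup isomorphic
to `π₁(X,x₀)`, and the endpoint map `Γ → ℤ/2` is a surjection (when `X` is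
path-connected) with kernel exactly `π₁(X,x₀)`, giving the exact sequence
`0 → π₁(X,x₀) → Γ → ℤ/2 → 0`. -/
theorem stmt_15 {X : Type*} [TopologicalSpace X] [PathConnectedSpace X]
    (σ : C(X, X)) (hσ : ∀ x, σ (σ x) = x) (x₀ : X) :
    ∃ (mul : (Path.Homotopic.Quotient x₀ x₀ ⊕ Path.Homotopic.Quotient x₀ (σ x₀)) →
             (Path.Homotopic.Quotient x₀ x₀ ⊕ Path.Homotopic.Quotient x₀ (σ x₀)) →
             (Path.Homotopic.Quotient x₀ x₀ ⊕ Path.Homotopic.Quotient x₀ (σ x₀)))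
      (one : Path.Homotopic.Quotient x₀ x₀ ⊕ Path.Homotopic.Quotient x₀ (σ x₀))
      (inv : (Path.Homotopic.Quotient x₀ x₀ ⊕ Path.Homotopic.Quotient x₀ (σ x₀)) →
             (Path.Homotopic.Quotient x₀ x₀ ⊕ Path.Homotopic.Quotient x₀ (σ x₀))),
      -- group axioms
      (∀ a b c, mul (mul a b) c = mul a (mul b c)) ∧
      (∀ a, mul one a = a) ∧ (∀ a, mul a one = a) ∧
      (∀ a, mul (inv a) a = one) ∧
      -- the multiplication `mul γ₂ γ₁` is concatenation, twisted by σ when γ₁ ends at σ x₀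
      (∀ (c a : Path.Homotopic.Quotient x₀ x₀),
        mul (Sum.inl c) (Sum.inl a) = Sum.inl (a.trans c)) ∧
      (∀ (c : Path.Homotopic.Quotient x₀ (σ x₀)) (a : Path.Homotopic.Quotient x₀ x₀),
        mul (Sum.inr c) (Sum.inl a) = Sum.inr (a.trans c)) ∧
      (∀ (c : Path.Homotopic.Quotient x₀ x₀) (a : Path.Homotopic.Quotient x₀ (σ x₀)),
        mul (Sum.inl c) (Sum.inr a) = Sum.inr (a.trans (c.map σ))) ∧
      (∀ (c a : Path.Homotopic.Quotient x₀ (σ x₀)),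
        mul (Sum.inr c) (Sum.inr a) = Sum.inl (a.trans
          (cast (by rw [hσ x₀]) (c.map σ) : Path.Homotopic.Quotient (σ x₀) x₀))) ∧
      -- π₁(X,x₀) embeds (the inclusion Sum.inl is injective: exactness on the left)
      Function.Injective
        (Sum.inl : Path.Homotopic.Quotient x₀ x₀ →
          (Path.Homotopic.Quotient x₀ x₀ ⊕ Path.Homotopic.Quotient x₀ (σ x₀))) ∧
      -- the loops form a normal subgroup
      (∀ (g : Path.Homotopic.Quotient x₀ x₀ ⊕ Path.Homotopic.Quotient x₀ (σ x₀))
          (a : Path.Homotopic.Quotient x₀ x₀),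
        ∃ b : Path.Homotopic.Quotient x₀ x₀, mul (mul g (Sum.inl a)) (inv g) = Sum.inl b) ∧
      -- exactness in the middle and surjectivity of the endpoint map Γ → ℤ/2:
      -- `Sum.elim 0 1 : Γ → ℤ/2` has kernel exactly the image of π₁ (true by definition)
      (∀ g : Path.Homotopic.Quotient x₀ x₀ ⊕ Path.Homotopic.Quotient x₀ (σ x₀), Sum.elim (fun _ => (0 : ZMod 2)) (fun _ => (1 : ZMod 2)) g = 0 ↔
        ∃ a : Path.Homotopic.Quotient x₀ x₀, g = Sum.inl a) ∧
      Function.Surjective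
        (Sum.elim (fun _ => (0 : ZMod 2)) (fun _ => (1 : ZMod 2)) :
          (Path.Homotopic.Quotient x₀ x₀ ⊕ Path.Homotopic.Quotient x₀ (σ x₀)) → ZMod 2) := by
  refine ⟨mul hσ, .inl (.refl x₀), inv hσ, mul_assoc hσ, one_mul hσ, mul_one hσ,
    inv_mul_cancel hσ, fun _ _ => rfl, fun _ _ => rfl, fun _ _ => rfl, fun c a => ?_,
    Sum.inl_injective, ?_, ?_, ?_⟩
  · rw [Quotient.typeCast_eq_cast _ _ rfl (hσ x₀).symm]
    rfl
  · rintro (g | g) a <;> exact ⟨_, rfl⟩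
  · rintro (g | g) <;> simp
  · intro z
    fin_cases z
    · exact ⟨.inl (.refl x₀), rfl⟩
    · exact ⟨.inr (.mk (PathConnectedSpace.somePath x₀ (σ x₀))), rfl⟩
end
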